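/- arXiv:1812.07966 — 6 statements merged into one kernel-verified Lean document; each statement's English description precedes it below -/
import Mathlib

section
/- Let k be an algebraically closed field, m = 2n, and let τ be an endomorphism of k^m such that the eigenspace of τ for some eigenvalue λ has dimension exactly n. Then there exists an n-dimensional linear subspace V of k^m such that k^m = V ⊕ τ(V). -/
/-!
Put `g = τ - λ`. By rank–nullity `ker g` and `range g` both have dimension `n`, and two subspaces
of equal dimension have a common complement `V`: enlarge both by a vector lying in neither (no
group is the union of two proper subgroups) and induct on the codimension. Since `V + ker g` is
everything, `g(V) = range g`, so `V + τ(V) ⊇ V + g(V) = V + range g` is everything, and as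
`dim τ(V) ≤ dim V = n` the sum is direct.
-/

open Module Submodule

theorem Submodule.exists_notMem_and_notMem {R M : Type*} [Ring R] [AddCommGroup M] [Module R M]
    {U W : Submodule R M} (hU : U ≠ ⊤) (hW : W ≠ ⊤) : ∃ x, x ∉ U ∧ x ∉ W := by
  obtain ⟨u, -, hu⟩ := SetLike.exists_of_lt hU.lt_top
  obtain ⟨w, -, hw⟩ := SetLike.exists_of_lt hW.lt_top
  by_cases huW : u ∈ W
  · by_cases hwU : w ∈ U
    · refine ⟨u + w, fun h ↦ hu ?_, fun h ↦ hw ?_⟩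
      · simpa using U.sub_mem h hwU
      · simpa using W.sub_mem h huW
    · exact ⟨w, hwU, hw⟩
  · exact ⟨u, hu, huW⟩

section DivisionRing

variable {K E : Type*} [DivisionRing K] [AddCommGroup E] [Module K E] [FiniteDimensional K E]

theorem Submodule.isCompl_of_codisjoint_of_finrank_add_le {s t : Submodule K E}
    (h : Codisjoint s t) (hdim : finrank K s + finrank K t ≤ finrank K E) : IsCompl s t := by
  refine ⟨?_, h⟩
  have := finrank_sup_add_finrank_inf_eq s t
  rw [h.eq_top, finrank_top] at this
  exact disjoint_iff.mpr (finrank_eq_zero.mp (by omega))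

theorem Submodule.isCompl_sup_span_singleton_of_isCompl {U C : Submodule K E} {x : E}
    (hx : x ∉ U) (h : IsCompl (U ⊔ K ∙ x) C) : IsCompl U (C ⊔ K ∙ x) := by
  refine isCompl_of_codisjoint_of_finrank_add_le ?_ ?_
  · rw [codisjoint_iff, sup_comm C, ← sup_assoc]
    exact h.codisjoint.eq_top
  · have hCx := finrank_add_le_finrank_add_finrank C (K ∙ x)
    have hx1 := finrank_span_singleton (K := K) (v := x) (by rintro rfl; exact hx U.zero_mem)
    have hUx := finrank_sup_span_singleton hx
    have := finrank_add_eq_of_isCompl h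
    omega

theorem Submodule.exists_isCompl_isCompl_of_finrank_eq {U W : Submodule K E}
    (h : finrank K U = finrank K W) : ∃ C, IsCompl U C ∧ IsCompl W C := by
  obtain ⟨d, hd⟩ : ∃ d, finrank K E - finrank K U = d := ⟨_, rfl⟩
  induction d generalizing U W with
  | zero =>
    have hU : U = ⊤ := eq_top_of_finrank_eq (by have := finrank_le U; omega)
    have hW : W = ⊤ := eq_top_of_finrank_eq (by have := finrank_le W; omega)
    subst hU hW
    exact ⟨⊥, isCompl_top_bot, isCompl_top_bot⟩
  | succ d ih =>
    have hU : U ≠ ⊤ := by rintro rfl; simp at hd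
    have hW : W ≠ ⊤ := by rintro rfl; rw [h, finrank_top] at hd; simp at hd
    obtain ⟨x, hxU, hxW⟩ := exists_notMem_and_notMem hU hW
    obtain ⟨C, hUC, hWC⟩ := ih (U := U ⊔ K ∙ x) (W := W ⊔ K ∙ x)
      (by rw [finrank_sup_span_singleton hxU, finrank_sup_span_singleton hxW, h])
      (by rw [finrank_sup_span_singleton hxU]; omega)
    exact ⟨C ⊔ K ∙ x, isCompl_sup_span_singleton_of_isCompl hxU hUC,
      isCompl_sup_span_singleton_of_isCompl hxW hWC⟩

end DivisionRing

theorem LinearMap.map_eq_range_of_codisjoint_ker {R M N : Type*} [Ring R] [AddCommGroup M]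
    [AddCommGroup N] [Module R M] [Module R N] {g : M →ₗ[R] N} {C : Submodule R M}
    (h : Codisjoint C (LinearMap.ker g)) : C.map g = LinearMap.range g := by
  rw [LinearMap.range_eq_map, ← h.eq_top, Submodule.map_sup,
    LinearMap.le_ker_iff_map.mp le_rfl, sup_bot_eq]

theorem Module.End.isCompl_map_of_isCompl_ker_of_isCompl_range {K E : Type*} [Field K]
    [AddCommGroup E] [Module K E] [FiniteDimensional K E] {f : Module.End K E} {c : K}
    {C : Submodule K E} (hker : IsCompl C (LinearMap.ker (f - c • 1)))
    (hrange : IsCompl C (LinearMap.range (f - c • 1))) :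
    IsCompl C (C.map f) := by
  set g := f - c • 1
  have hmap : C.map g ≤ C ⊔ C.map f := by
    rintro _ ⟨v, hv, rfl⟩
    have hgv : g v = f v - c • v := by simp [g]
    rw [hgv]
    exact sub_mem (mem_sup_right (mem_map_of_mem hv)) (mem_sup_left (C.smul_mem c hv))
  refine isCompl_of_codisjoint_of_finrank_add_le ?_ ?_
  · rw [codisjoint_iff, eq_top_iff, ← hrange.codisjoint.eq_top,
      ← LinearMap.map_eq_range_of_codisjoint_ker hker.codisjoint]
    exact sup_le le_sup_left hmap
  · have := finrank_add_eq_of_isCompl hker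
    have := finrank_add_eq_of_isCompl hrange
    have := LinearMap.finrank_range_add_finrank_ker g
    have := finrank_map_le f C
    omega

theorem stmt_0_general (k : Type*) [Field k] (n : ℕ)
    (τ : Module.End k (Fin (2 * n) → k)) (lam : k)
    (h : Module.finrank k (Module.End.eigenspace τ lam) = n) :
    ∃ V : Submodule k (Fin (2 * n) → k),
      Module.finrank k V = n ∧ IsCompl V (V.map τ) := by
  rw [Module.End.eigenspace_def] at h
  have hrange : finrank k (LinearMap.range (τ - lam • 1)) = n := by
    have := LinearMap.finrank_range_add_finrank_ker (τ - lam • 1)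
    rw [h, finrank_fin_fun] at this
    omega
  obtain ⟨V, hVker, hVrange⟩ := exists_isCompl_isCompl_of_finrank_eq (h.trans hrange.symm)
  refine ⟨V, ?_,
    Module.End.isCompl_map_of_isCompl_ker_of_isCompl_range hVker.symm hVrange.symm⟩
  have := finrank_add_eq_of_isCompl hVker
  rw [h, finrank_fin_fun] at this
  omega

theorem stmt_0 (k : Type*) [Field k] [IsAlgClosed k] (n : ℕ) (hn : 0 < n)
    (τ : Module.End k (Fin (2 * n) → k)) (lam : k)
    (h : Module.finrank k (Module.End.eigenspace τ lam) = n) :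
    ∃ V : Submodule k (Fin (2 * n) → k),
      Module.finrank k V = n ∧ IsCompl V (V.map τ) :=
  stmt_0_general k n τ lam h
end

section
/- Let k be an algebraically closed field, m ≥ 2n, and let τ be an endomorphism of k^m such that every eigenspace of τ has dimension at most m − n. Then there exists an n-dimensional linear subspace V of k^m such that dim(V + τ(V)) = 2n, i.e. V ∩ τ(V) = 0 and τ is injective on V. -/
/-!
Grow `V` one vector at a time, keeping `dim (V ⊔ τ V) = 2 dim V`, and let `W = V ⊔ τ V`. If
`τ v ∉ W ⊔ k v` for some `v`, then also some `u ∉ W` has `τ u ∉ W ⊔ k u`, and `V ⊔ k u` is again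
good. Otherwise `τ` acts on `E ⧸ W` as a scalar `a`, so `σ = τ - a` maps `E` into `W`. Replacing
`τ` by `σ` changes neither `V ⊔ τ V` nor the eigenspace bound (up to a shift of the eigenvalue), so
by induction on the dimension there is a good subspace inside `range σ`; it is completed by
vectors chosen greedily, transversal to `range σ` and with images independent of what is already
there.
-/

open Module Submodule

section

variable {R k E F : Type*} [Field k] [AddCommGroup E] [Module k E] [AddCommGroup F] [Module k F]

theorem Module.End.eigenspace_sub_smul_one [CommRing R] [Module R E] (f : End R E) (a μ : R) :
    (f - a • 1).eigenspace μ = f.eigenspace (a + μ) := by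
  ext x
  simp [add_smul, sub_eq_iff_eq_add, add_comm]

theorem Module.End.finrank_eigenspace_restrict_le [FiniteDimensional k E] (f : End k E)
    {p : Submodule k E} (hp : ∀ x ∈ p, f x ∈ p) (μ : k) :
    finrank k (eigenspace (f.restrict hp) μ) ≤ finrank k (f.eigenspace μ) := by
  rw [← finrank_map_subtype_eq]
  exact finrank_mono (eigenspace_restrict_le_eigenspace f hp μ)

namespace Submodule

theorem exists_notMem_notMem_of_ne_top [Ring R] [Module R E] {A B : Submodule R E}
    (hA : A ≠ ⊤) (hB : B ≠ ⊤) : ∃ v, v ∉ A ∧ v ∉ B := by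
  obtain ⟨a, ha⟩ := SetLike.exists_not_mem_of_ne_top A hA
  obtain ⟨b, hb⟩ := SetLike.exists_not_mem_of_ne_top B hB
  by_cases haB : a ∈ B
  · by_cases hbA : b ∈ A
    · refine ⟨a + b, fun h => ha ?_, fun h => hb ?_⟩
      · simpa using A.sub_mem h hbA
      · simpa using B.sub_mem h haB
    · exact ⟨b, hbA, hb⟩
  · exact ⟨a, ha, haB⟩

theorem sup_map_sub_smul_one [CommRing R] [Module R E] (V : Submodule R E) (f : End R E) (a : R) :
    V ⊔ V.map (f - a • 1) = V ⊔ V.map f := by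
  have key : ∀ (g : End R E) (b : R), V ⊔ V.map (g + b • 1) ≤ V ⊔ V.map g := fun g b =>
    sup_le le_sup_left <| map_le_iff_le_comap.mpr fun x hx =>
      add_mem (mem_sup_right (mem_map_of_mem hx)) (mem_sup_left (V.smul_mem b hx))
  refine le_antisymm (by simpa [sub_eq_add_neg] using key f (-a)) ?_
  simpa using key (f - a • 1) a

theorem map_subtype_sup_map_restrict [CommRing R] [Module R E] (f : End R E) {p : Submodule R E}
    (hp : ∀ x ∈ p, f x ∈ p) (V : Submodule R p) :
    (V ⊔ V.map (f.restrict hp)).map p.subtype = V.map p.subtype ⊔ (V.map p.subtype).map f := by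
  rw [map_sup, ← map_comp, ← map_comp, LinearMap.subtype_comp_restrict, LinearMap.domRestrict]

theorem ne_top_of_finrank_lt [FiniteDimensional k E] {W : Submodule k E}
    (h : finrank k W < finrank k E) : W ≠ ⊤ := by
  rintro rfl
  rw [finrank_top] at h
  exact h.false

theorem finrank_sup_eq_add_of_le [FiniteDimensional k E] {A X U : Submodule k E} (hX : X ≤ A)
    (h : finrank k ↥(A ⊔ U) = finrank k A + finrank k U) :
    finrank k ↥(X ⊔ U) = finrank k X + finrank k U := by
  have hA := finrank_sup_add_finrank_inf_eq A U
  have hXU := finrank_sup_add_finrank_inf_eq X U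
  have := finrank_mono (inf_le_inf_right U hX)
  omega

theorem mem_sup_span_singleton_exchange {W : Submodule k E} {x y : E}
    (hx : x ∈ W ⊔ span k {y}) (hxW : x ∉ W) : y ∈ W ⊔ span k {x} := by
  have h : ∀ z : E, W ⊔ span k {z} = span k (insert z W) := fun z => by
    rw [span_insert, span_eq, sup_comm]
  rw [h] at hx ⊢
  exact mem_span_insert_exchange hx (by rwa [span_eq])

theorem exists_range_sub_smul_one_le (W : Submodule k E) (f : End k E)
    (h : ∀ v, f v ∈ W ⊔ span k {v}) : ∃ a : k, LinearMap.range (f - a • 1) ≤ W := by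
  have hW : W ≤ W.comap f := fun w hw => by
    simpa [sup_eq_left.mpr ((span_singleton_le_iff_mem w W).mpr hw)] using h w
  obtain ⟨a, ha⟩ : ∃ a : k, W.mapQ W f hW = a • 1 := by
    refine LinearMap.exists_eq_smul_id_of_forall_notLinearIndependent fun y => ?_
    obtain ⟨x, rfl⟩ := W.mkQ_surjective y
    obtain ⟨w, hw, _, hc, hx⟩ := mem_sup.mp (h x)
    obtain ⟨c, rfl⟩ := mem_span_singleton.mp hc
    rw [LinearIndependent.pair_iff]
    intro hind
    have := hind c (-1) (by
      rw [mkQ_apply, mapQ_apply, ← hx, Quotient.mk_add, (Quotient.mk_eq_zero W).mpr hw]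
      simp)
    exact one_ne_zero (neg_eq_zero.mp this.2)
  refine ⟨a, ?_⟩
  rintro _ ⟨x, rfl⟩
  have hx := LinearMap.congr_fun ha (W.mkQ x)
  rw [mkQ_apply, mapQ_apply] at hx
  rw [← Quotient.mk_eq_zero, LinearMap.sub_apply, Quotient.mk_sub, hx]
  simp [Quotient.mk_smul]

theorem exists_notMem_apply_notMem_sup_span [FiniteDimensional k E] (W : Submodule k E)
    (f : End k E) (hW : finrank k W + 2 ≤ finrank k E) {v : E}
    (hv : f v ∉ W ⊔ span k {v}) : ∃ u, u ∉ W ∧ f u ∉ W ⊔ span k {u} := by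
  by_cases hvW : v ∉ W
  · exact ⟨v, hvW, hv⟩
  rw [not_not] at hvW
  have hfv : f v ∉ W := fun h => hv (mem_sup_left h)
  obtain ⟨u, hu⟩ := SetLike.exists_not_mem_of_ne_top (W ⊔ span k {f v})
    (ne_top_of_finrank_lt (by rw [finrank_sup_span_singleton hfv]; omega))
  have huW : u ∉ W := fun h => hu (mem_sup_left h)
  by_cases hfu : f u ∉ W ⊔ span k {u}
  · exact ⟨u, huW, hfu⟩
  rw [not_not] at hfu
  refine ⟨v + u, fun h => huW (by simpa using W.sub_mem h hvW), fun h => hu ?_⟩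
  have hspan : W ⊔ span k {v + u} ≤ W ⊔ span k {u} :=
    sup_le le_sup_left <| (span_singleton_le_iff_mem _ _).mpr <|
      add_mem (mem_sup_left hvW) (mem_sup_right (mem_span_singleton_self u))
  have hfv' : f v ∈ W ⊔ span k {u} := by
    simpa using sub_mem (hspan h) hfu
  exact mem_sup_span_singleton_exchange hfv' hfv

theorem exists_finrank_sup_map_succ [FiniteDimensional k E] (f : End k E) (V : Submodule k E)
    (hVf : finrank k ↥(V ⊔ V.map f) = 2 * finrank k V)
    (hE : finrank k ↥(V ⊔ V.map f) + 2 ≤ finrank k E) {v : E}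
    (hv : f v ∉ V ⊔ V.map f ⊔ span k {v}) :
    ∃ V' : Submodule k E, finrank k V' = finrank k V + 1 ∧
      finrank k ↥(V' ⊔ V'.map f) = 2 * finrank k V' := by
  obtain ⟨u, hu, hfu⟩ := exists_notMem_apply_notMem_sup_span _ f hE hv
  have hV' : finrank k ↥(V ⊔ span k {u}) = finrank k V + 1 :=
    finrank_sup_span_singleton fun h => hu (mem_sup_left h)
  refine ⟨V ⊔ span k {u}, hV', ?_⟩
  rw [map_sup, map_span, Set.image_singleton, sup_sup_sup_comm, ← sup_assoc,
    finrank_sup_span_singleton hfu, finrank_sup_span_singleton hu, hVf, hV']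
  ring

theorem exists_finrank_sup_eq_finrank_sup_map_eq [FiniteDimensional k E] [FiniteDimensional k F]
    (g : E →ₗ[k] F) (A : Submodule k E) (B : Submodule k F) (t : ℕ)
    (hA : finrank k A + t ≤ finrank k E) (hB : finrank k B + t ≤ finrank k (LinearMap.range g)) :
    ∃ U : Submodule k E, finrank k U = t ∧ finrank k ↥(A ⊔ U) = finrank k A + t ∧
      finrank k ↥(B ⊔ U.map g) = finrank k B + t := by
  induction t with
  | zero =>
    exact ⟨⊥, finrank_bot k E, by rw [sup_bot_eq, add_zero], by rw [map_bot, sup_bot_eq, add_zero]⟩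
  | succ t ih =>
    obtain ⟨U, hU, hAU, hBU⟩ := ih (by omega) (by omega)
    have hAU_top : A ⊔ U ≠ ⊤ := ne_top_of_finrank_lt (by omega)
    have hBU_top : (B ⊔ U.map g).comap g ≠ ⊤ := fun htop => by
      have : LinearMap.range g ≤ B ⊔ U.map g := by
        rw [LinearMap.range_eq_map, ← map_le_iff_le_comap.symm, htop]
      have := finrank_mono this
      omega
    obtain ⟨v, hvA, hvB⟩ := exists_notMem_notMem_of_ne_top hAU_top hBU_top
    refine ⟨U ⊔ span k {v}, ?_, ?_, ?_⟩
    · rw [finrank_sup_span_singleton fun h => hvA (mem_sup_right h), hU]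
    · rw [← sup_assoc, finrank_sup_span_singleton hvA, hAU, add_assoc]
    · rw [map_sup, map_span, Set.image_singleton, ← sup_assoc,
        finrank_sup_span_singleton (show g v ∉ B ⊔ U.map g from hvB), hBU, add_assoc]

theorem exists_finrank_sup_map_of_le_range [FiniteDimensional k E] (σ : End k E)
    (V : Submodule k E) (hV : V ≤ LinearMap.range σ)
    (hVσ : finrank k ↥(V ⊔ V.map σ) = 2 * finrank k V) (t : ℕ)
    (hrange : 2 * finrank k V + t ≤ finrank k (LinearMap.range σ))
    (hE : finrank k (LinearMap.range σ) + t ≤ finrank k E) :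
    ∃ V' : Submodule k E, finrank k V' = finrank k V + t ∧
      finrank k ↥(V' ⊔ V'.map σ) = 2 * finrank k V' := by
  obtain ⟨U, hU, hIU, hBU⟩ := exists_finrank_sup_eq_finrank_sup_map_eq σ (LinearMap.range σ)
    (V ⊔ V.map σ) t hE (by rwa [hVσ])
  rw [← hU] at hIU hBU
  have hBσU : V ⊔ V.map σ ⊔ U.map σ ≤ LinearMap.range σ :=
    sup_le (sup_le hV LinearMap.map_le_range) LinearMap.map_le_range
  have hVU := finrank_sup_eq_add_of_le hV hIU
  refine ⟨V ⊔ U, by rw [hVU, hU], ?_⟩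
  have hsplit : V ⊔ U ⊔ (V ⊔ U).map σ = V ⊔ V.map σ ⊔ U.map σ ⊔ U := by
    rw [map_sup]; ac_rfl
  rw [hsplit, finrank_sup_eq_add_of_le hBσU hIU, hBU, hVσ, hVU]
  ring

end Submodule

theorem exists_finrank_eq_finrank_sup_map_eq_two_mul [FiniteDimensional k E] (f : End k E) (n : ℕ)
    (hn : 2 * n ≤ finrank k E) (hf : ∀ μ, finrank k (f.eigenspace μ) + n ≤ finrank k E) :
    ∃ V : Submodule k E, finrank k V = n ∧ finrank k ↥(V ⊔ V.map f) = 2 * n := by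
  obtain ⟨d, hd⟩ : ∃ d, finrank k E = d := ⟨_, rfl⟩
  induction d using Nat.strong_induction_on generalizing E n with
  | _ d ih =>
  rw [hd] at hn hf
  induction n with
  | zero => exact ⟨⊥, finrank_bot k E, by simp⟩
  | succ p ihp =>
  obtain ⟨V, hV, hVf⟩ := ihp (by omega) fun μ => by have := hf μ; omega
  by_cases hW : ∃ v, f v ∉ V ⊔ V.map f ⊔ span k {v}
  · obtain ⟨v, hv⟩ := hW
    obtain ⟨V', hV', hV'f⟩ := exists_finrank_sup_map_succ f V (by rw [hVf, hV]) (by omega) hv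
    exact ⟨V', by rw [hV', hV], by rw [hV'f, hV', hV]⟩
  push Not at hW
  obtain ⟨a, ha⟩ := exists_range_sub_smul_one_le _ f hW
  set σ := f - a • 1
  have hσ : ∀ μ, finrank k (σ.eigenspace μ) + (p + 1) ≤ d := fun μ => by
    rw [Module.End.eigenspace_sub_smul_one]; exact hf _
  have hr : finrank k (LinearMap.range σ) ≤ 2 * p := (finrank_mono ha).trans hVf.le
  have hrank := LinearMap.finrank_range_add_finrank_ker σ
  have hker := hσ 0
  rw [Module.End.eigenspace_zero] at hker
  -- `n₂` vectors transversal to `range σ`, the other `p + 1 - n₂` inside it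
  set r := finrank k (LinearMap.range σ)
  set n₂ := min (p + 1) (d - r)
  have hI : ∀ x ∈ LinearMap.range σ, σ x ∈ LinearMap.range σ := fun x _ => ⟨x, rfl⟩
  obtain ⟨V₁, hV₁, hV₁σ⟩ := ih r (by omega) (σ.restrict hI) (p + 1 - n₂) (by omega)
    (fun μ => by
      have := (Module.End.eigenspace (σ.restrict hI) μ).finrank_le
      have := Module.End.finrank_eigenspace_restrict_le σ hI μ
      have := hσ μ
      omega) rfl
  obtain ⟨V', hV', hV'σ⟩ := exists_finrank_sup_map_of_le_range σ (V₁.map (LinearMap.range σ).subtype)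
    (map_subtype_le _ _)
    (by rw [← map_subtype_sup_map_restrict σ hI, finrank_map_subtype_eq, finrank_map_subtype_eq,
      hV₁σ, hV₁])
    n₂ (by rw [finrank_map_subtype_eq, hV₁]; omega) (by omega)
  rw [finrank_map_subtype_eq, hV₁] at hV'
  refine ⟨V', by omega, ?_⟩
  rw [← sup_map_sub_smul_one V' f a, hV'σ, hV']
  omega

end

theorem stmt_2_general (k : Type*) [Field k] (n m : ℕ)
    (hm : 2 * n ≤ m) (τ : Module.End k (Fin m → k))
    (h : ∀ lam : k, Module.finrank k (Module.End.eigenspace τ lam) ≤ m - n) :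
    ∃ V : Submodule k (Fin m → k),
      Module.finrank k V = n ∧ Module.finrank k ↥(V ⊔ V.map τ) = 2 * n := by
  have hE : finrank k (Fin m → k) = m := finrank_fin_fun k
  exact exists_finrank_eq_finrank_sup_map_eq_two_mul τ n (by rwa [hE])
    fun μ => by rw [hE]; have := h μ; omega

theorem stmt_2 (k : Type*) [Field k] [IsAlgClosed k] (n m : ℕ) (hn : 0 < n)
    (hm : 2 * n ≤ m) (τ : Module.End k (Fin m → k))
    (h : ∀ lam : k, Module.finrank k (Module.End.eigenspace τ lam) ≤ m - n) :
    ∃ V : Submodule k (Fin m → k),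
      Module.finrank k V = n ∧ Module.finrank k ↥(V ⊔ V.map τ) = 2 * n :=
  stmt_2_general k n m hm τ h
end

section
/- Let k be an infinite field, m ≥ 2n, and τ an endomorphism of k^m such that every eigenvalue λ ≠ 1 of τ over the algebraic closure has eigenspace of dimension at most m − n, and the eigenspace for eigenvalue 1 also has dimension at most m − n. Then there exists an n-dimensional subspace V of k^m such that for all v₁, v₂ ∈ V, τ(v₁) = v₂ implies v₁ = v₂ = 0. -/
/-!
Build `V` one vector at a time, keeping `U = V + τ V` of dimension `2 dim V` and the invariant
`dim (U + R_λ) ≥ min (m, dim V + rank (τ - λ))` for all `λ ∈ k`, where `R_λ = range (τ - λ)`.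
The eigenspace hypothesis gives `rank (τ - λ) ≥ n`.

To enlarge `V` we need `w` with `w, τ w` independent modulo `U`. If there were none, `τ` would be
a homothety `λ` modulo `U` (as `dim (W / U) ≥ 2`), so `R_λ ⊆ U`, which the invariant forbids while
`dim V < n`. To keep the invariant, `w` must also avoid the subspaces `U + R_λ ≠ W`; there are
finitely many, since such `λ` are eigenvalues. Both conditions hold along a line `w₀ + t u`
except for finitely many `t`, and `k` is infinite.
-/

open Module Module.End Submodule LinearMap Polynomial TensorProduct

section VectorSpace

variable {K Q : Type*} [Field K] [AddCommGroup Q] [Module K Q]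

theorem linearIndependent_pair_of_mul_sub_mul_ne_zero {x y : Q} (f g : Dual K Q)
    (h : f x * g y - f y * g x ≠ 0) : LinearIndependent K ![x, y] := by
  rw [LinearIndependent.pair_iff]
  intro s t hst
  have hf : s * f x + t * f y = 0 := by simpa using congrArg f hst
  have hg : s * g x + t * g y = 0 := by simpa using congrArg g hst
  constructor
  · refine (mul_eq_zero.1 (?_ : s * (f x * g y - f y * g x) = 0)).resolve_right h
    linear_combination g y * hf - f y * hg
  · refine (mul_eq_zero.1 (?_ : t * (f x * g y - f y * g x) = 0)).resolve_right h
    linear_combination f x * hg - g x * hf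

theorem notMem_span_singleton_of_linearIndependent_pair {x y : Q}
    (h : LinearIndependent K ![x, y]) : x ∉ K ∙ y := by
  rintro hx
  obtain ⟨a, rfl⟩ := mem_span_singleton.1 hx
  have := (LinearIndependent.pair_iff.1 h) 1 (-a) (by module)
  exact one_ne_zero this.1

theorem exists_dual_mul_sub_mul_ne_zero {x y : Q} (h : LinearIndependent K ![x, y]) :
    ∃ f g : Dual K Q, f x * g y - f y * g x ≠ 0 := by
  have vanishes : ∀ {f : Dual K Q} {z : Q}, (K ∙ z).map f = ⊥ → f z = 0 := fun hf =>
    (Submodule.mem_bot K).1 (hf ▸ mem_map_of_mem (mem_span_singleton_self _))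
  obtain ⟨f, hfx, hfy⟩ := exists_dual_map_eq_bot_of_notMem
    (notMem_span_singleton_of_linearIndependent_pair h) inferInstance
  obtain ⟨g, hgy, hgx⟩ := exists_dual_map_eq_bot_of_notMem
    (notMem_span_singleton_of_linearIndependent_pair (LinearIndependent.pair_symm_iff.1 h))
    inferInstance
  exact ⟨f, g, by simpa [vanishes hfy, vanishes hgx] using mul_ne_zero hfx hgy⟩

theorem finite_setOf_not_linearIndependent_add_smul {a b c d : Q}
    (h : LinearIndependent K ![a, c]) :
    {t : K | ¬ LinearIndependent K ![a + t • b, c + t • d]}.Finite := by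
  obtain ⟨f, g, hfg⟩ := exists_dual_mul_sub_mul_ne_zero h
  -- the determinant of the pair against `f, g`, which is nonzero at `t = 0`
  let p : K[X] := (C (f a) + X * C (f b)) * (C (g c) + X * C (g d)) -
    (C (f c) + X * C (f d)) * (C (g a) + X * C (g b))
  have hp : ∀ t, p.eval t =
      f (a + t • b) * g (c + t • d) - f (c + t • d) * g (a + t • b) := by
    intro t
    simp only [p, eval_sub, eval_mul, eval_add, eval_C, eval_X, map_add, map_smul, smul_eq_mul]
  have hp0 : p ≠ 0 := fun h0 => hfg (by simpa [h0] using (hp 0).symm)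
  refine (finite_setOfPred_isRoot hp0).subset fun t ht => ?_
  by_contra hroot
  exact ht (linearIndependent_pair_of_mul_sub_mul_ne_zero f g (by rwa [← hp]))

theorem Submodule.subsingleton_setOf_add_smul_mem (p : Submodule K Q) (w : Q) {u : Q}
    (hu : u ∉ p) : {t : K | w + t • u ∈ p}.Subsingleton := by
  intro t₁ h₁ t₂ h₂
  by_contra hne
  have : (t₁ - t₂) • u ∈ p := by convert p.sub_mem h₁ h₂ using 1; module
  exact hu ((p.smul_mem_iff (sub_ne_zero.2 hne)).1 this)

theorem LinearMap.exists_eq_smul_of_forall_not_linearIndependent {W : Type*} [AddCommGroup W]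
    [Module K W] {π σ : W →ₗ[K] Q} (hπ : Function.Surjective π) (hQ : 1 < finrank K Q)
    (h : ∀ w, ¬ LinearIndependent K ![π w, σ w]) : ∃ l : K, σ = l • π := by
  obtain ⟨s, hs⟩ := π.exists_rightInverse_of_surjective (range_eq_top.2 hπ)
  have hπs : ∀ q, π (s q) = q := LinearMap.congr_fun hs
  obtain ⟨l, hl⟩ := (σ ∘ₗ s).exists_eq_smul_id_of_forall_notLinearIndependent fun q => by
    simpa [hπs] using h (s q)
  have hσs : ∀ q, σ (s q) = l • q := LinearMap.congr_fun hl
  have hker : ∀ z, π z = 0 → σ z = 0 := by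
    intro z hz
    by_contra hσz
    obtain ⟨q, hq⟩ := exists_linearIndependent_pair_of_one_lt_finrank hQ hσz
    apply h (s q + z)
    rw [map_add, map_add, hπs, hz, add_zero, hσs, LinearIndependent.pair_iff]
    intro a b hab
    obtain ⟨hb, hab'⟩ := LinearIndependent.pair_iff.1 hq b (a + b * l)
      (by linear_combination (norm := module) hab)
    exact ⟨by simpa [hb] using hab', hb⟩
  refine ⟨l, LinearMap.ext fun w => ?_⟩
  have hz : π (w - s (π w)) = 0 := by rw [map_sub, hπs, sub_self]
  calc σ w = σ (s (π w)) + σ (w - s (π w)) := by rw [← map_add, add_sub_cancel]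
    _ = (l • π) w := by rw [hσs, hker _ hz, add_zero, LinearMap.smul_apply]

theorem Module.End.exists_range_sub_smul_le_of_forall_not_linearIndependent {W : Type*}
    [AddCommGroup W] [Module K W] (τ : End K W) (U : Submodule K W)
    (hU : 1 < finrank K (W ⧸ U)) (h : ∀ w, ¬ LinearIndependent K ![U.mkQ w, U.mkQ (τ w)]) :
    ∃ l : K, range (τ - l • 1) ≤ U := by
  obtain ⟨l, hl⟩ := exists_eq_smul_of_forall_not_linearIndependent (σ := U.mkQ ∘ₗ τ)
    U.mkQ_surjective hU h
  refine ⟨l, ?_⟩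
  rintro _ ⟨w, rfl⟩
  rw [← U.ker_mkQ, mem_ker]
  simpa [sub_eq_zero] using LinearMap.congr_fun hl w

end VectorSpace

theorem Module.End.finite_setOf_sup_range_sub_smul_ne_top {K W : Type*} [Field K]
    [AddCommGroup W] [Module K W] [FiniteDimensional K W] (τ : End K W) (U : Submodule K W) :
    {l : K | U ⊔ range (τ - l • 1) ≠ ⊤}.Finite := by
  refine τ.finite_hasEigenvalue.subset fun l hl => ?_
  rw [Set.mem_ofPred_eq, hasEigenvalue_iff, eigenspace_def, Ne, ker_eq_bot,
    LinearMap.injective_iff_surjective]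
  intro hsurj
  exact hl (by rw [range_eq_top.2 hsurj, sup_top_eq])

theorem Module.End.finrank_eigenspace_le_finrank_eigenspace_baseChange {k K W : Type*} [Field k]
    [Field K] [Algebra k K] [AddCommGroup W] [Module k W] [FiniteDimensional k W]
    (τ : End k W) (l : k) :
    finrank k (τ.eigenspace l) ≤
      finrank K (eigenspace (τ.baseChange K) (algebraMap k K l)) := by
  set E := τ.eigenspace l
  have hinj : Function.Injective (E.subtype.baseChange K) := by
    rw [baseChange_eq_ltensor]
    exact Module.Flat.lTensor_preserves_injective_linearMap _ E.injective_subtype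
  have hτE : τ ∘ₗ E.subtype = l • E.subtype := LinearMap.ext fun x => mem_eigenspace_iff.1 x.2
  have hrange : range (E.subtype.baseChange K) ≤
      eigenspace (τ.baseChange K) (algebraMap k K l) := by
    rintro _ ⟨x, rfl⟩
    rw [mem_eigenspace_iff, ← LinearMap.comp_apply, ← baseChange_comp, hτE, baseChange_smul,
      LinearMap.smul_apply, algebraMap_smul]
  calc finrank k E = finrank K (K ⊗[k] E) := finrank_baseChange.symm
    _ = finrank K (range (E.subtype.baseChange K)) := (finrank_range_of_inj hinj).symm
    _ ≤ _ := Submodule.finrank_mono hrange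

section Displacement

variable {k W : Type*} [Field k] [AddCommGroup W] [Module k W]

def Module.End.Displaces (τ : End k W) (V : Submodule k W) : Prop :=
  ∀ v ∈ V, τ v ∈ V → v = 0

def Module.End.ExpandsRanges (τ : End k W) (V : Submodule k W) : Prop :=
  ∀ l : k, min (finrank k W) (finrank k V + finrank k (range (τ - l • 1))) ≤
    finrank k ↥(V ⊔ V.map τ ⊔ range (τ - l • 1))

namespace Module.End

variable {τ : End k W} {V : Submodule k W} {w : W}

theorem Displaces.sup_span_singleton (hV : τ.Displaces V)
    (hw : LinearIndependent k ![(V ⊔ V.map τ).mkQ w, (V ⊔ V.map τ).mkQ (τ w)]) :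
    τ.Displaces (V ⊔ k ∙ w) := by
  intro x hx hτx
  obtain ⟨v, hv, _, ha, rfl⟩ := mem_sup.1 hx
  obtain ⟨a, rfl⟩ := mem_span_singleton.1 ha
  obtain ⟨v', hv', _, hb, hτx'⟩ := mem_sup.1 hτx
  obtain ⟨b, rfl⟩ := mem_span_singleton.1 hb
  have hU : (-b) • w + a • τ w ∈ V ⊔ V.map τ := by
    have : (-b) • w + a • τ w = v' - τ v := by
      rw [map_add, map_smul] at hτx'
      linear_combination (norm := module) -hτx'
    rw [this]
    exact sub_mem (mem_sup_left hv') (mem_sup_right (mem_map_of_mem hv))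
  rw [← (V ⊔ V.map τ).ker_mkQ, mem_ker, map_add, map_smul, map_smul] at hU
  obtain ⟨hb0, ha0⟩ := LinearIndependent.pair_iff.1 hw _ _ hU
  rw [neg_eq_zero] at hb0
  subst ha0 hb0
  simp only [zero_smul, add_zero] at hτx' ⊢
  exact hV v hv (hτx' ▸ hv')

theorem expandsRanges_bot : τ.ExpandsRanges ⊥ := fun l => by
  rw [Submodule.map_bot, bot_sup_eq, bot_sup_eq, finrank_bot, zero_add]
  exact min_le_right _ _

theorem ExpandsRanges.sup_span_singleton [FiniteDimensional k W] (hV : τ.ExpandsRanges V)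
    (hwV : w ∉ V) (hw : ∀ l : k, V ⊔ V.map τ ⊔ range (τ - l • 1) ≠ ⊤ →
      w ∉ V ⊔ V.map τ ⊔ range (τ - l • 1)) :
    τ.ExpandsRanges (V ⊔ k ∙ w) := by
  intro l
  have hle : V ⊔ V.map τ ⊔ range (τ - l • 1) ≤
      (V ⊔ k ∙ w) ⊔ (V ⊔ k ∙ w).map τ ⊔ range (τ - l • 1) :=
    sup_le_sup_right (sup_le_sup le_sup_left (map_mono le_sup_left)) _
  have hmem : w ∈ (V ⊔ k ∙ w) ⊔ (V ⊔ k ∙ w).map τ ⊔ range (τ - l • 1) :=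
    mem_sup_left (mem_sup_left (mem_sup_right (mem_span_singleton_self w)))
  rw [finrank_sup_span_singleton hwV]
  by_cases htop : V ⊔ V.map τ ⊔ range (τ - l • 1) = ⊤
  · rw [htop] at hle
    rw [top_unique hle, finrank_top]
    exact min_le_left _ _
  · have hlt := Submodule.finrank_lt_finrank_of_lt
      (lt_of_le_of_ne hle fun h => hw l htop (h ▸ hmem))
    have := hV l
    omega

theorem ExpandsRanges.exists_linearIndependent_mkQ [FiniteDimensional k W]
    (hV : τ.ExpandsRanges V) (hrank : ∀ l : k, finrank k V < finrank k (range (τ - l • 1)))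
    (hW : 2 * finrank k V + 1 < finrank k W) :
    ∃ w, LinearIndependent k ![(V ⊔ V.map τ).mkQ w, (V ⊔ V.map τ).mkQ (τ w)] := by
  have hU : finrank k ↥(V ⊔ V.map τ) ≤ 2 * finrank k V :=
    (finrank_add_le_finrank_add_finrank V _).trans (by have := finrank_map_le τ V; omega)
  by_contra! hdep
  have hquot := (V ⊔ V.map τ).finrank_quotient_add_finrank
  obtain ⟨l, hl⟩ :=
    τ.exists_range_sub_smul_le_of_forall_not_linearIndependent (V ⊔ V.map τ) (by omega) hdep
  have := hV l
  rw [sup_eq_left.2 hl] at this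
  have := hrank l
  omega

end Module.End

end Displacement

theorem Module.End.exists_linearIndependent_mkQ_forall_notMem {k W ι : Type*} [Field k]
    [Infinite k] [AddCommGroup W] [Module k W] [Finite ι] (τ : End k W) (U : Submodule k W)
    {p : ι → Submodule k W} (hp : ∀ i, p i ≠ ⊤) {w₀ : W}
    (hw₀ : LinearIndependent k ![U.mkQ w₀, U.mkQ (τ w₀)]) :
    ∃ w, LinearIndependent k ![U.mkQ w, U.mkQ (τ w)] ∧ ∀ i, w ∉ p i := by
  obtain ⟨u, hu⟩ := exists_forall_notMem_of_forall_ne_top p hp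
  have hbad : ({t : k | ¬ LinearIndependent k
      ![U.mkQ w₀ + t • U.mkQ u, U.mkQ (τ w₀) + t • U.mkQ (τ u)]} ∪
      ⋃ i, {t : k | w₀ + t • u ∈ p i}).Finite :=
    (finite_setOf_not_linearIndependent_add_smul hw₀).union
      (Set.finite_iUnion fun i => ((p i).subsingleton_setOf_add_smul_mem w₀ (hu i)).finite)
  obtain ⟨t, ht⟩ := hbad.exists_notMem
  simp only [Set.mem_union, Set.mem_iUnion, Set.mem_ofPred_eq, not_or, not_not, not_exists] at ht
  refine ⟨w₀ + t • u, ?_, ht.2⟩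
  simpa only [map_add, map_smul] using ht.1

section Construction

variable {k W : Type*} [Field k] [Infinite k] [AddCommGroup W] [Module k W]
  [FiniteDimensional k W] {τ : End k W}

theorem Module.End.ExpandsRanges.exists_sup_span_singleton {V : Submodule k W}
    (hD : τ.Displaces V) (hE : τ.ExpandsRanges V)
    (hrank : ∀ l : k, finrank k V < finrank k (range (τ - l • 1)))
    (hW : 2 * finrank k V + 1 < finrank k W) :
    ∃ w, τ.Displaces (V ⊔ k ∙ w) ∧ τ.ExpandsRanges (V ⊔ k ∙ w) ∧
      finrank k ↥(V ⊔ k ∙ w) = finrank k V + 1 := by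
  set U := V ⊔ V.map τ
  obtain ⟨w₀, hw₀⟩ := hE.exists_linearIndependent_mkQ hrank hW
  have : Finite {l : k | U ⊔ range (τ - l • 1) ≠ ⊤} :=
    (τ.finite_setOf_sup_range_sub_smul_ne_top U).to_subtype
  obtain ⟨w, hw, hwY⟩ := τ.exists_linearIndependent_mkQ_forall_notMem U
    (p := fun l : {l : k | U ⊔ range (τ - l • 1) ≠ ⊤} => U ⊔ range (τ - (l : k) • 1))
    (fun l => l.2) hw₀
  have hwV : w ∉ V := fun h =>
    (LinearIndependent.ne_zero 0 hw) ((Submodule.Quotient.mk_eq_zero _).2 (mem_sup_left h))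
  exact ⟨w, hD.sup_span_singleton hw, hE.sup_span_singleton hwV fun l hl => hwY ⟨l, hl⟩,
    finrank_sup_span_singleton hwV⟩

theorem Module.End.exists_displaces_finrank_eq (τ : End k W) {n : ℕ}
    (hrank : ∀ l : k, n ≤ finrank k (range (τ - l • 1))) (hn : 2 * n ≤ finrank k W) :
    ∃ V : Submodule k W, finrank k V = n ∧ τ.Displaces V := by
  suffices ∀ j ≤ n, ∃ V : Submodule k W, finrank k V = j ∧ τ.Displaces V ∧ τ.ExpandsRanges V by
    obtain ⟨V, hV, hD, -⟩ := this n le_rfl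
    exact ⟨V, hV, hD⟩
  intro j hj
  induction j with
  | zero => exact ⟨⊥, finrank_bot k W, fun v hv _ => (mem_bot k).1 hv, expandsRanges_bot⟩
  | succ j ih =>
    obtain ⟨V, rfl, hD, hE⟩ := ih (by omega)
    obtain ⟨w, hD', hE', hV'⟩ := hE.exists_sup_span_singleton hD
      (fun l => by have := hrank l; omega) (by omega)
    exact ⟨_, hV', hD', hE'⟩

end Construction

theorem stmt_4_general (k : Type*) [Field k] [Infinite k] (n m : ℕ)
    (hm : 2 * n ≤ m) (τ : Module.End k (Fin m → k))
    (h : ∀ lam : AlgebraicClosure k,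
      Module.finrank (AlgebraicClosure k)
        (Module.End.eigenspace
          (LinearMap.baseChange (AlgebraicClosure k) τ) lam) ≤ m - n) :
    ∃ V : Submodule k (Fin m → k), Module.finrank k V = n ∧
      ∀ v₁ ∈ V, ∀ v₂ ∈ V, τ v₁ = v₂ → v₁ = 0 ∧ v₂ = 0 := by
  have hrank : ∀ l : k, n ≤ finrank k (range (τ - l • 1)) := fun l => by
    have hker := (τ.finrank_eigenspace_le_finrank_eigenspace_baseChange l).trans (h _)
    have := (τ - l • 1).finrank_range_add_finrank_ker
    rw [eigenspace_def] at hker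
    rw [finrank_fin_fun] at this
    omega
  obtain ⟨V, hVn, hV⟩ := τ.exists_displaces_finrank_eq hrank (by rwa [finrank_fin_fun])
  refine ⟨V, hVn, fun v₁ h₁ v₂ h₂ hτ => ?_⟩
  obtain rfl : v₁ = 0 := hV v₁ h₁ (hτ ▸ h₂)
  exact ⟨rfl, by rw [← hτ, map_zero]⟩

theorem stmt_4 (k : Type*) [Field k] [Infinite k] (n m : ℕ) (hn : 0 < n)
    (hm : 2 * n ≤ m) (τ : Module.End k (Fin m → k))
    (h : ∀ lam : AlgebraicClosure k,
      Module.finrank (AlgebraicClosure k)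
        (Module.End.eigenspace
          (LinearMap.baseChange (AlgebraicClosure k) τ) lam) ≤ m - n) :
    ∃ V : Submodule k (Fin m → k), Module.finrank k V = n ∧
      ∀ v₁ ∈ V, ∀ v₂ ∈ V, τ v₁ = v₂ → v₁ = 0 ∧ v₂ = 0 :=
  stmt_4_general k n m hm τ h
end

section
/- Let k be an algebraically closed field of characteristic zero and π a permutation of {1,…,m}. Then the set Y of vectors v ∈ k^m such that v and π·v are linearly dependent, minus the fixed space of π, has dimension at most m − ⌊m/2⌋; equivalently, the union over all λ ≠ 1 of the eigenspaces ker(Π − λI) has dimension at most m − ⌊m/2⌋, where Π is the permutation matrix of π. -/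
theorem stmt_15 (k : Type*) [Field k] [IsAlgClosed k] [CharZero k]
    (m : ℕ) (π : Equiv.Perm (Fin m)) :
    ∀ lam : k, lam ≠ 1 →
      Module.finrank k
        (Module.End.eigenspace (LinearMap.funLeft k k π) lam) ≤ m - m / 2 := by
  classical
  intro lam hlam
  -- set of cycle representatives (minimal element in each nontrivial cycle)
  set S : Finset (Fin m) :=
    Finset.univ.filter (fun i => π i ≠ i ∧ ∀ j, π.SameCycle i j → i ≤ j) with hS
  -- restriction map
  let E := Module.End.eigenspace (LinearMap.funLeft k k π) lam
  let R : E →ₗ[k] (S → k) :=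
    { toFun := fun v s => (v : Fin m → k) s
      map_add' := by intros; rfl
      map_smul' := by intros; rfl }
  have happ : ∀ (v : E) (x : Fin m),
      (v : Fin m → k) (π x) = lam * (v : Fin m → k) x := by
    intro v x
    have hv := v.2
    rw [Module.End.mem_eigenspace_iff] at hv
    simpa [LinearMap.funLeft_apply] using congrFun hv x
  have hpow : ∀ (v : E) (n : ℕ) (x : Fin m),
      (v : Fin m → k) ((π ^ n) x) = lam ^ n * (v : Fin m → k) x := by
    intro v n
    induction n with
    | zero => simp
    | succ n ih =>
      intro x
      rw [pow_succ', Equiv.Perm.mul_apply, happ v, ih x]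
      ring
  have hinj : Function.Injective R := by
    rw [← LinearMap.ker_eq_bot (f := R), Submodule.eq_bot_iff]
    intro v hv
    simp only [LinearMap.mem_ker] at hv
    have hv0 : ∀ s ∈ S, (v : Fin m → k) s = 0 := fun s hs => congrFun hv ⟨s, hs⟩
    ext i
    show (v : Fin m → k) i = 0
    by_cases hfix : π i = i
    · have h1 := happ v i
      rw [hfix] at h1
      have : (lam - 1) * (v : Fin m → k) i = 0 := by linear_combination -h1
      rcases mul_eq_zero.mp this with h | h
      · exact absurd (by linear_combination h) hlam
      · exact h
    · -- take the min of the cycle of i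
      set C : Finset (Fin m) := Finset.univ.filter (fun j => π.SameCycle i j) with hC
      have hCi : i ∈ C := by simp [hC, Equiv.Perm.SameCycle.refl]
      have hCne : C.Nonempty := ⟨i, hCi⟩
      set s := C.min' hCne with hsdef
      have hsC : s ∈ C := C.min'_mem hCne
      have hsc : π.SameCycle i s := by simpa [hC] using hsC
      have hsS : s ∈ S := by
        simp only [hS, Finset.mem_filter, Finset.mem_univ, true_and]
        constructor
        · intro hss
          exact hfix ((hsc.apply_eq_self_iff).mpr hss)
        · intro j hj
          have : j ∈ C := by
            simp only [hC, Finset.mem_filter, Finset.mem_univ, true_and]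
            exact hsc.trans hj
          exact C.min'_le j this
      obtain ⟨n, _, hn⟩ := (hsc.symm).exists_pow_eq'
      have := hpow v n s
      rw [hn] at this
      rw [this, hv0 s hsS, mul_zero]
  -- cardinality bound: S and π '' S are disjoint
  have hcard : 2 * S.card ≤ m := by
    have hdisj : Disjoint S (S.image π) := by
      rw [Finset.disjoint_left]
      intro a haS haI
      obtain ⟨b, hbS, hba⟩ := Finset.mem_image.mp haI
      subst hba
      simp only [hS, Finset.mem_filter, Finset.mem_univ, true_and] at haS hbS
      have hab : π.SameCycle b (π b) := ⟨1, by simp⟩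
      have h1 : b ≤ π b := hbS.2 _ hab
      have h2 : π b ≤ b := haS.2 b hab.symm
      exact hbS.1 (le_antisymm h2 h1)
    have hcard2 : (S ∪ S.image π).card = S.card + (S.image π).card :=
      Finset.card_union_of_disjoint hdisj
    have himg : (S.image π).card = S.card := Finset.card_image_of_injective _ π.injective
    have hle : (S ∪ S.image π).card ≤ m := by
      simpa using Finset.card_le_card (Finset.subset_univ (S ∪ S.image π))
    omega
  have h1 : Module.finrank k E ≤ Module.finrank k (S → k) :=
    LinearMap.finrank_le_finrank_of_injective hinj
  have h2 : Module.finrank k (S → k) = S.card := by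
    simp [Module.finrank_pi]
  have h3 : Module.finrank k E ≤ S.card := by rw [← h2]; exact h1
  show Module.finrank k E ≤ m - m / 2
  exact h3.trans (by omega)
end

section
/- Let k be an algebraically closed field and τ an endomorphism of k^{2n} having 2n distinct eigenvalues. Then there exists an n-dimensional subspace V with k^{2n} = V ⊕ τ(V); explicitly, if v₁,…,v_{2n} are eigenvectors for the distinct eigenvalues, V = span(v₁ + v₂, v₃ + v₄, …, v_{2n−1} + v_{2n}) works. -/
/-!
Since `τ (x + y) = α • x + β • y` for eigenvectors `x`, `y` with eigenvalues `α ≠ β`, the vectors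
`x` and `y` are linear combinations of `x + y` and `τ (x + y)`. Hence `V + τ V` contains every
eigenvector, so it is the whole space; as `V` has at most `n` generators, counting dimensions in
`k^{2n}` forces `dim V = n` and `V ∩ τ V = 0`.
-/

open Module

namespace Submodule

variable {K M : Type*} [Field K] [AddCommGroup M] [Module K M]

theorem mem_and_mem_of_add_mem_of_apply_add_mem {W : Submodule K M} {τ : End K M}
    {x y : M} {α β : K} (hαβ : α ≠ β) (hx : τ x = α • x) (hy : τ y = β • y)
    (h : x + y ∈ W) (hτ : τ (x + y) ∈ W) : x ∈ W ∧ y ∈ W := by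
  have hx_eq : x = (β - α)⁻¹ • (β • (x + y) - τ (x + y)) := by
    rw [map_add, hx, hy,
      show β • (x + y) - (α • x + β • y) = (β - α) • x by module,
      smul_smul, inv_mul_cancel₀ (sub_ne_zero.mpr hαβ.symm), one_smul]
  have hxW : x ∈ W := hx_eq ▸ W.smul_mem _ (W.sub_mem (W.smul_mem β h) hτ)
  exact ⟨hxW, by simpa using W.sub_mem h hxW⟩

theorem finrank_eq_and_isCompl_map_of_sup_map_eq_top [FiniteDimensional K M]
    {V : Submodule K M} (f : End K M) {m : ℕ} (hV : finrank K V ≤ m)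
    (hM : finrank K M = 2 * m) (hsup : V ⊔ V.map f = ⊤) :
    finrank K V = m ∧ IsCompl V (V.map f) := by
  have hdim := finrank_sup_add_finrank_inf_eq V (V.map f)
  rw [hsup, finrank_top, hM] at hdim
  have hmap : finrank K (V.map f) ≤ finrank K V := finrank_map_le f V
  have hinf : finrank K ↥(V ⊓ V.map f) = 0 := by omega
  exact ⟨by omega, disjoint_iff.mpr (finrank_eq_zero.mp hinf), codisjoint_iff.mpr hsup⟩

end Submodule

theorem Fin.exists_val_eq_two_mul_or_eq_two_mul_add_one {n : ℕ} (j : Fin (2 * n)) :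
    ∃ i : Fin n, (j : ℕ) = 2 * i ∨ (j : ℕ) = 2 * i + 1 :=
  ⟨⟨j / 2, by omega⟩, by simp only; omega⟩

theorem stmt_16 (k : Type*) [Field k] (n : ℕ)
    (τ : Module.End k (Fin (2 * n) → k))
    (lam : Fin (2 * n) → k) (hlam : Function.Injective lam)
    (v : Fin (2 * n) → (Fin (2 * n) → k))
    (hv : ∀ i, v i ≠ 0 ∧ τ (v i) = lam i • v i) :
    let V : Submodule k (Fin (2 * n) → k) :=
      Submodule.span k (Set.range fun i : Fin n =>
        v ⟨2 * i.val, by omega⟩ + v ⟨2 * i.val + 1, by omega⟩)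
    Module.finrank k V = n ∧ IsCompl V (V.map τ) := by
  intro V
  have hspan : Submodule.span k (Set.range v) = ⊤ :=
    (τ.eigenvectors_linearIndependent' lam hlam v fun i =>
      ⟨End.mem_eigenspace_iff.mpr (hv i).2, (hv i).1⟩).span_eq_top_of_card_eq_finrank' (by simp)
  have hsup : V ⊔ V.map τ = ⊤ := by
    rw [eq_top_iff, ← hspan, Submodule.span_le]
    rintro _ ⟨j, rfl⟩
    obtain ⟨i, hj⟩ := Fin.exists_val_eq_two_mul_or_eq_two_mul_add_one j
    obtain ⟨hvl, hvr⟩ := Submodule.mem_and_mem_of_add_mem_of_apply_add_mem (W := V ⊔ V.map τ)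
      (hlam.ne (Fin.ne_of_val_ne (by simp))) (hv ⟨2 * i, by omega⟩).2 (hv ⟨2 * i + 1, by omega⟩).2
      (Submodule.mem_sup_left (Submodule.subset_span ⟨i, rfl⟩))
      (Submodule.mem_sup_right (Submodule.mem_map_of_mem (Submodule.subset_span ⟨i, rfl⟩)))
    rcases hj with hj | hj
    · rwa [show j = ⟨2 * i, _⟩ from Fin.ext hj]
    · rwa [show j = ⟨2 * i + 1, _⟩ from Fin.ext hj]
  exact Submodule.finrank_eq_and_isCompl_map_of_sup_map_eq_top τ
    ((finrank_range_le_card _).trans_eq (Fintype.card_fin n)) (by simp) hsup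
end

section
/- Let k be a field and τ : k^m → k^m a linear map, and suppose there exist an index set 𝔍 of size n and an invertible matrix S ∈ GL_m(k) with τ = S J S⁻¹ such that each row of J indexed by 𝔍 equals the corresponding standard basis row vector (i.e., J restricted to those rows is the identity on those coordinates). Then for any n-dimensional subspace V with basis matrix A such that the n × n matrix (S⁻¹A) restricted to rows 𝔍 is invertible, the relation τ(v₁) = v₂ with v₁, v₂ ∈ V implies v₁ = v₂. -/
open scoped Matrix

theorem stmt_18 (k : Type*) [Field k] [DecidableEq k] (m n : ℕ) (hn : 1 ≤ n)
    (hnm : n ≤ m) (τ : Module.End k (Fin m → k))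
    (S : Matrix (Fin m) (Fin m) k) [Invertible S]
    (J : Matrix (Fin m) (Fin m) k)
    (hτ : LinearMap.toMatrix' τ = S * J * S⁻¹)
    (𝔍 : Fin n → Fin m) (h𝔍 : Function.Injective 𝔍)
    (hJ : ∀ i : Fin n, ∀ j : Fin m, J (𝔍 i) j = if 𝔍 i = j then 1 else 0)
    (A : Matrix (Fin m) (Fin n) k)
    (hA : IsUnit (Matrix.of fun r c : Fin n => (S⁻¹ * A) (𝔍 r) c)) :
    let V : Submodule k (Fin m → k) := LinearMap.range A.mulVecLin
    ∀ v₁ ∈ V, ∀ v₂ ∈ V, τ v₁ = v₂ → v₁ = v₂ := by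
  intro V v₁ hv₁ v₂ hv₂ hτv
  obtain ⟨x, hx⟩ := hv₁
  obtain ⟨y, hy⟩ := hv₂
  rw [Matrix.mulVecLin_apply] at hx hy
  have hτapp : τ v₁ = (S * J * S⁻¹) *ᵥ v₁ := by
    rw [← hτ, ← Matrix.toLin'_apply, Matrix.toLin'_toMatrix']
  have key : ∀ (w : Fin m → k) (i : Fin n), (J *ᵥ w) (𝔍 i) = w (𝔍 i) := by
    intro w i
    simp [Matrix.mulVec, dotProduct, hJ i, ite_mul, Finset.sum_ite_eq]
  have h1 : S⁻¹ *ᵥ v₂ = J *ᵥ (S⁻¹ *ᵥ v₁) := by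
    calc S⁻¹ *ᵥ v₂ = S⁻¹ *ᵥ ((S * J * S⁻¹) *ᵥ v₁) := by rw [← hτv, hτapp]
    _ = (S⁻¹ * (S * J * S⁻¹)) *ᵥ v₁ := Matrix.mulVec_mulVec v₁ _ _
    _ = (J * S⁻¹) *ᵥ v₁ := by
        rw [show S⁻¹ * (S * J * S⁻¹) = (S⁻¹ * S) * (J * S⁻¹) by
          simp only [Matrix.mul_assoc], Matrix.inv_mul_of_invertible, Matrix.one_mul]
    _ = J *ᵥ (S⁻¹ *ᵥ v₁) := (Matrix.mulVec_mulVec v₁ _ _).symm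
  set B : Matrix (Fin n) (Fin n) k := Matrix.of fun r c : Fin n => (S⁻¹ * A) (𝔍 r) c with hB
  have hsub : ∀ z : Fin n → k, B *ᵥ z = fun i => ((S⁻¹ * A) *ᵥ z) (𝔍 i) := by
    intro z
    funext i
    simp [hB, Matrix.mulVec, dotProduct]
  have hBx : B *ᵥ x = B *ᵥ y := by
    rw [hsub, hsub]
    funext i
    have h2 : ((S⁻¹ * A) *ᵥ x) (𝔍 i) = ((S⁻¹ * A) *ᵥ y) (𝔍 i) := by
      rw [← Matrix.mulVec_mulVec, ← Matrix.mulVec_mulVec, hx, hy, h1, key]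
    exact h2
  have hxy : x = y := Matrix.mulVec_injective_iff_isUnit.mpr hA hBx
  rw [← hx, ← hy, hxy]
end
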